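/- For all integers m ≥ 0 and 0 ≤ j ≤ m, the standard inner product of any point of Λ(m, j) with any point of Λ(m, m) is divisible by 2ʲ. -/

import Mathlib

/-- `Hmat m` : the `2^m × 2^m` matrix defined by `H₀ = [1]` and
`H_{m+1} = [[Hₘ, Hₘ], [0, Hₘ]]` in block form. -/
def Hmat : (m : ℕ) → Matrix (Fin (2 ^ m)) (Fin (2 ^ m)) ℤ
  | 0 => Matrix.of fun _ _ => 1
  | m + 1 =>
      Matrix.reindex
        (finSumFinEquiv.trans (finCongr (by rw [pow_succ, mul_two] :
          2 ^ m + 2 ^ m = 2 ^ (m + 1))))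
        (finSumFinEquiv.trans (finCongr (by rw [pow_succ, mul_two] :
          2 ^ m + 2 ^ m = 2 ^ (m + 1))))
        (Matrix.fromBlocks (Hmat m) (Hmat m) 0 (Hmat m))

/-- `Smat m` : the `2^m × 2^m` Sylvester Hadamard matrix, `𝓗₀ = [1]`,
`𝓗_{m+1} = [[𝓗ₘ, 𝓗ₘ], [𝓗ₘ, −𝓗ₘ]]`. -/
def Smat : (m : ℕ) → Matrix (Fin (2 ^ m)) (Fin (2 ^ m)) ℤ
  | 0 => Matrix.of fun _ _ => 1
  | m + 1 =>
      Matrix.reindex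
        (finSumFinEquiv.trans (finCongr (by rw [pow_succ, mul_two] :
          2 ^ m + 2 ^ m = 2 ^ (m + 1))))
        (finSumFinEquiv.trans (finCongr (by rw [pow_succ, mul_two] :
          2 ^ m + 2 ^ m = 2 ^ (m + 1))))
        (Matrix.fromBlocks (Smat m) (Smat m) (Smat m) (-(Smat m)))

/-- Hamming weight of the `s`-th row of `Hmat m`. -/
def rowWeight (m : ℕ) (s : Fin (2 ^ m)) : ℕ :=
  (Finset.univ.filter (fun t => Hmat m s t ≠ 0)).card

/-- `Gmat m j` : the matrix whose `s`-th row is the `s`-th row of `Hmat m`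
multiplied by `2^(j − ℓ)` (truncated subtraction) where `2^ℓ` is the Hamming
weight of that row. -/
def Gmat (m j : ℕ) : Matrix (Fin (2 ^ m)) (Fin (2 ^ m)) ℤ :=
  Matrix.of fun s t => (2 : ℤ) ^ (j - Nat.log 2 (rowWeight m s)) * Hmat m s t

/-- The lattice generated by the rows of `G`. -/
def latticeOf {n : ℕ} (G : Matrix (Fin n) (Fin n) ℤ) : Set (Fin n → ℤ) :=
  { x | ∃ u : Fin n → ℤ, x = Matrix.vecMul u G }

/-!
Row `s` of `Hₘ` has weight `w_s = 2 ^ ℓ_s`, and the block recursion `H_{m+1} = [[H, H], [0, H]]`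
shows by induction that `w_s * w_t ∣ 2 ^ m * ⟨H_s, H_t⟩`: passing to `m + 1` doubles the weights of
the top rows, and each doubling is matched either by the new factor `2` or by the doubled top-left
block `2 H Hᵀ` of `H_{m+1} H_{m+1}ᵀ`. As `G(m, j) = diag (2 ^ (j - ℓ_s)) Hₘ`, this gives
`2 ^ (j + k) ∣ 2 ^ m * ⟨G(m, j)_s, G(m, k)_t⟩` for all rows, and divisibility of the Gram entries
passes to the lattices by bilinearity; take `k = m`.
-/

open Matrix

theorem dvd_vecMul_dotProduct_vecMul {ι κ μ R : Type*} [Fintype ι] [Fintype κ] [Fintype μ]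
    [CommRing R] {A : Matrix κ ι R} {B : Matrix μ ι R} {d : R}
    (h : ∀ s t, d ∣ (A * Bᵀ) s t) (u : κ → R) (v : μ → R) :
    d ∣ (u ᵥ* A) ⬝ᵥ (v ᵥ* B) := by
  rw [← transpose_transpose B, vecMul_transpose, dotProduct_mulVec, vecMul_vecMul]
  exact Finset.dvd_sum fun t _ => dvd_mul_of_dvd_left
    (Finset.dvd_sum fun s _ => dvd_mul_of_dvd_right (h s t) _) _

def finSumFinPow (m : ℕ) : Fin (2 ^ m) ⊕ Fin (2 ^ m) ≃ Fin (2 ^ (m + 1)) :=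
  finSumFinEquiv.trans (finCongr (by rw [pow_succ, mul_two]))

theorem Hmat_succ_submatrix (m : ℕ) :
    (Hmat (m + 1)).submatrix (finSumFinPow m) (finSumFinPow m) =
      fromBlocks (Hmat m) (Hmat m) 0 (Hmat m) := by
  simp only [Hmat, finSumFinPow, reindex_apply, submatrix_submatrix, Equiv.symm_comp_self,
    submatrix_id_id]

theorem Hmat_succ_apply (m : ℕ) (a b : Fin (2 ^ m) ⊕ Fin (2 ^ m)) :
    Hmat (m + 1) (finSumFinPow m a) (finSumFinPow m b) =
      fromBlocks (Hmat m) (Hmat m) 0 (Hmat m) a b := by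
  rw [← Hmat_succ_submatrix, submatrix_apply]

theorem Hmat_succ_mul_transpose_submatrix (m : ℕ) :
    (Hmat (m + 1) * (Hmat (m + 1))ᵀ).submatrix (finSumFinPow m) (finSumFinPow m) =
      fromBlocks (Hmat m * (Hmat m)ᵀ + Hmat m * (Hmat m)ᵀ) (Hmat m * (Hmat m)ᵀ)
        (Hmat m * (Hmat m)ᵀ) (Hmat m * (Hmat m)ᵀ) := by
  rw [← submatrix_mul_equiv _ _ _ (finSumFinPow m), ← transpose_submatrix,
    Hmat_succ_submatrix, fromBlocks_transpose, fromBlocks_multiply]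
  simp only [transpose_zero, Matrix.mul_zero, Matrix.zero_mul, zero_add]

theorem sum_finSumFinPow {M : Type*} [AddCommMonoid M] (m : ℕ) (f : Fin (2 ^ (m + 1)) → M) :
    ∑ i, f i = ∑ s, f (finSumFinPow m (.inl s)) + ∑ s, f (finSumFinPow m (.inr s)) := by
  rw [← Equiv.sum_comp (finSumFinPow m) f, Fintype.sum_sum_type]

theorem rowWeight_eq_sum (m : ℕ) (s : Fin (2 ^ m)) :
    rowWeight m s = ∑ t, if Hmat m s t ≠ 0 then 1 else 0 :=
  Finset.card_filter _ _

theorem rowWeight_succ_inl (m : ℕ) (s : Fin (2 ^ m)) :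
    rowWeight (m + 1) (finSumFinPow m (.inl s)) = 2 * rowWeight m s := by
  simp only [rowWeight_eq_sum m, rowWeight_eq_sum (m + 1), sum_finSumFinPow m, Hmat_succ_apply,
    fromBlocks_apply₁₁, fromBlocks_apply₁₂, two_mul]

theorem rowWeight_succ_inr (m : ℕ) (s : Fin (2 ^ m)) :
    rowWeight (m + 1) (finSumFinPow m (.inr s)) = rowWeight m s := by
  simp only [rowWeight_eq_sum m, rowWeight_eq_sum (m + 1), sum_finSumFinPow m, Hmat_succ_apply,
    fromBlocks_apply₂₁, fromBlocks_apply₂₂, Matrix.zero_apply, ne_eq, not_true_eq_false, if_false,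
    Finset.sum_const_zero, zero_add]

theorem rowWeight_zero (s : Fin (2 ^ 0)) : rowWeight 0 s = 1 := by
  simp [rowWeight_eq_sum, Hmat]

theorem rowWeight_eq_two_pow (m : ℕ) (s : Fin (2 ^ m)) : ∃ ℓ, rowWeight m s = 2 ^ ℓ := by
  induction m with
  | zero => exact ⟨0, rowWeight_zero s⟩
  | succ m ih =>
    obtain ⟨a, rfl⟩ := (finSumFinPow m).surjective s
    rcases a with s | s <;> obtain ⟨ℓ, hℓ⟩ := ih s
    · exact ⟨ℓ + 1, by rw [rowWeight_succ_inl, hℓ, pow_succ']⟩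
    · exact ⟨ℓ, by rw [rowWeight_succ_inr, hℓ]⟩

theorem two_pow_log_rowWeight (m : ℕ) (s : Fin (2 ^ m)) :
    2 ^ Nat.log 2 (rowWeight m s) = rowWeight m s := by
  obtain ⟨ℓ, hℓ⟩ := rowWeight_eq_two_pow m s
  rw [hℓ, Nat.log_pow one_lt_two]

theorem rowWeight_mul_dvd_Hmat_mul_transpose (m : ℕ) (s t : Fin (2 ^ m)) :
    (rowWeight m s * rowWeight m t : ℤ) ∣ 2 ^ m * (Hmat m * (Hmat m)ᵀ) s t := by
  induction m with
  | zero => simp [rowWeight_zero]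
  | succ m ih =>
    obtain ⟨a, rfl⟩ := (finSumFinPow m).surjective s
    obtain ⟨b, rfl⟩ := (finSumFinPow m).surjective t
    have hblock := congr_fun₂ (Hmat_succ_mul_transpose_submatrix m) a b
    rw [submatrix_apply] at hblock
    rw [hblock]
    rcases a with s | s <;> rcases b with t | t <;>
      simp only [rowWeight_succ_inl, rowWeight_succ_inr, fromBlocks_apply₁₁, fromBlocks_apply₁₂,
        fromBlocks_apply₂₁, fromBlocks_apply₂₂, Matrix.add_apply, pow_succ] <;>
      push_cast
    · exact (dvd_of_eq (by ring)).trans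
        ((mul_dvd_mul_left 4 (ih s t)).trans (dvd_of_eq (by ring)))
    · exact (dvd_of_eq (by ring)).trans
        ((mul_dvd_mul_left 2 (ih s t)).trans (dvd_of_eq (by ring)))
    · exact (dvd_of_eq (by ring)).trans
        ((mul_dvd_mul_left 2 (ih s t)).trans (dvd_of_eq (by ring)))
    · exact (ih s t).trans (Dvd.intro 2 (by ring))

theorem Gmat_eq_diagonal_mul (m j : ℕ) :
    Gmat m j = diagonal (fun s => 2 ^ (j - Nat.log 2 (rowWeight m s))) * Hmat m := by
  ext s t
  rw [diagonal_mul, Gmat, of_apply]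

theorem Gmat_mul_transpose_apply (m j k : ℕ) (s t : Fin (2 ^ m)) :
    (Gmat m j * (Gmat m k)ᵀ) s t =
      2 ^ (j - Nat.log 2 (rowWeight m s)) * (Hmat m * (Hmat m)ᵀ) s t *
        2 ^ (k - Nat.log 2 (rowWeight m t)) := by
  rw [Gmat_eq_diagonal_mul, Gmat_eq_diagonal_mul, transpose_mul, diagonal_transpose,
    Matrix.mul_assoc, ← Matrix.mul_assoc (Hmat m), diagonal_mul, mul_diagonal, mul_assoc]

theorem two_pow_add_dvd_Gmat_mul_transpose (m j k : ℕ) (s t : Fin (2 ^ m)) :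
    (2 : ℤ) ^ (j + k) ∣ 2 ^ m * (Gmat m j * (Gmat m k)ᵀ) s t := by
  have hP := rowWeight_mul_dvd_Hmat_mul_transpose m s t
  rw [← two_pow_log_rowWeight m s, ← two_pow_log_rowWeight m t] at hP
  push_cast at hP
  set a := Nat.log 2 (rowWeight m s)
  set b := Nat.log 2 (rowWeight m t)
  calc (2 : ℤ) ^ (j + k) ∣ 2 ^ (j - a + a) * 2 ^ (k - b + b) := by
        rw [← pow_add]; exact pow_dvd_pow 2 (by omega)
    _ = 2 ^ (j - a) * 2 ^ (k - b) * (2 ^ a * 2 ^ b) := by ring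
    _ ∣ 2 ^ (j - a) * 2 ^ (k - b) * (2 ^ m * (Hmat m * (Hmat m)ᵀ) s t) := mul_dvd_mul_left _ hP
    _ = 2 ^ m * (Gmat m j * (Gmat m k)ᵀ) s t := by rw [Gmat_mul_transpose_apply]; ring

theorem inner_product_Gmj_Gmm_divisible_general (m j : ℕ) :
    ∀ x ∈ latticeOf (Gmat m j), ∀ y ∈ latticeOf (Gmat m m),
      (2 : ℤ) ^ j ∣ ∑ i, x i * y i := by
  rintro x ⟨u, rfl⟩ y ⟨v, rfl⟩
  refine dvd_vecMul_dotProduct_vecMul (fun s t => ?_) u v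
  have h := two_pow_add_dvd_Gmat_mul_transpose m j m s t
  rw [pow_add, mul_comm] at h
  exact (mul_dvd_mul_iff_left (pow_ne_zero m two_ne_zero)).1 h

/-- The inner product of any point of `Λ(m, j)` with any point of `Λ(m, m)` is
divisible by `2^j`. -/
theorem inner_product_Gmj_Gmm_divisible (m j : ℕ) (hj : j ≤ m) :
    ∀ x ∈ latticeOf (Gmat m j), ∀ y ∈ latticeOf (Gmat m m),
      (2 : ℤ) ^ j ∣ ∑ i, x i * y i :=
  inner_product_Gmj_Gmm_divisible_general m j
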